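/- The four points V₃=(8,−2,−4), V₄=(6,−3,−6), V₁₃=(12,0,0) and V₁₅=(10,−1,−2) of ℝ³ are collinear (they lie on a common line), and moreover V₁₅ lies in the open segment between V₇=(10,−1,−8) and V₈=(10,−1,1). Hence the line L₂ through V₄ and V₁₃ meets the primary knot K₀ in at least the four points V₃, V₄, V₁₃, V₁₅. -/

import Mathlib

noncomputable section

/-- A line in ℝ³: a 1-dimensional affine subspace, in parametric form. -/
def IsLine (L : Set (Fin 3 → ℝ)) : Prop :=
  ∃ p v : Fin 3 → ℝ, v ≠ 0 ∧ L = {x | ∃ t : ℝ, x = p + t • v}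

def V₁ : Fin 3 → ℝ := ![0, 0, 0]
def V₂ : Fin 3 → ℝ := ![0, 0, -4]
def V₃ : Fin 3 → ℝ := ![8, -2, -4]
def V₄ : Fin 3 → ℝ := ![6, -3, -6]
def V₅ : Fin 3 → ℝ := ![0, 0, -6]
def V₆ : Fin 3 → ℝ := ![0, 0, -8]
def V₇ : Fin 3 → ℝ := ![10, -1, -8]
def V₈ : Fin 3 → ℝ := ![10, -1, 1]
def V₉ : Fin 3 → ℝ := ![6, 1, 0]
def V₁₀ : Fin 3 → ℝ := ![8, 0, -1]
def V₁₁ : Fin 3 → ℝ := ![6, -1, 0]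
def V₁₂ : Fin 3 → ℝ := ![12, -2, -3]
def V₁₃ : Fin 3 → ℝ := ![12, 0, 0]
def V₁₄ : Fin 3 → ℝ := ![6, 2, 0]

/-- The point V₁₅ = (10,−1,−2) on the edge V₇V₈. -/
def V₁₅ : Fin 3 → ℝ := ![10, -1, -2]

/-- The primary knot K₀: the closed polygon with successive vertices V₁,…,V₁₄. -/
def K₀ : Set (Fin 3 → ℝ) :=
  segment ℝ V₁ V₂ ∪ segment ℝ V₂ V₃ ∪ segment ℝ V₃ V₄ ∪ segment ℝ V₄ V₅ ∪
  segment ℝ V₅ V₆ ∪ segment ℝ V₆ V₇ ∪ segment ℝ V₇ V₈ ∪ segment ℝ V₈ V₉ ∪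
  segment ℝ V₉ V₁₀ ∪ segment ℝ V₁₀ V₁₁ ∪ segment ℝ V₁₁ V₁₂ ∪ segment ℝ V₁₂ V₁₃ ∪
  segment ℝ V₁₃ V₁₄ ∪ segment ℝ V₁₄ V₁

/-!
V₃ and V₁₅ are the points with parameters 1/3 and 2/3 on the segment from V₄ to V₁₃, so all
four points lie on the line L₂ through V₄ and V₁₃; they are distinct since their first
coordinates 8, 6, 12, 10 are. V₃, V₄, V₁₃ are vertices of K₀, and V₁₅ is also the point with
parameter 2/3 on the edge from V₇ to V₈.
-/

open AffineMap

theorem V₃_eq_lineMap_V₄_V₁₃ : V₃ = lineMap V₄ V₁₃ (1 / 3 : ℝ) := by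
  ext i; fin_cases i <;> norm_num [V₃, V₄, V₁₃, lineMap_apply_module]

theorem V₁₅_eq_lineMap_V₄_V₁₃ : V₁₅ = lineMap V₄ V₁₃ (2 / 3 : ℝ) := by
  ext i; fin_cases i <;> norm_num [V₁₅, V₄, V₁₃, lineMap_apply_module]

theorem V₁₅_eq_lineMap_V₇_V₈ : V₁₅ = lineMap V₇ V₈ (2 / 3 : ℝ) := by
  ext i; fin_cases i <;> norm_num [V₁₅, V₇, V₈, lineMap_apply_module]

theorem V₁₅_mem_openSegment_V₇_V₈ : V₁₅ ∈ openSegment ℝ V₇ V₈ :=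
  V₁₅_eq_lineMap_V₇_V₈ ▸ lineMap_mem_openSegment ℝ V₇ V₈ ⟨by norm_num, by norm_num⟩

/-- V₃, V₄, V₁₃, V₁₅ are collinear, V₁₅ lies in the open segment between V₇ and V₈,
and hence the line L₂ through V₄ and V₁₃ meets K₀ in at least the four points
V₃, V₄, V₁₃, V₁₅. -/
theorem quadrisecant_L₂_of_K₀ :
    Collinear ℝ ({V₃, V₄, V₁₃, V₁₅} : Set (Fin 3 → ℝ)) ∧
    V₁₅ ∈ openSegment ℝ V₇ V₈ ∧
    V₃ ≠ V₄ ∧ V₃ ≠ V₁₃ ∧ V₃ ≠ V₁₅ ∧ V₄ ≠ V₁₃ ∧ V₄ ≠ V₁₅ ∧ V₁₃ ≠ V₁₅ ∧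
    ({V₃, V₄, V₁₃, V₁₅} : Set (Fin 3 → ℝ)) ⊆
      (affineSpan ℝ ({V₄, V₁₃} : Set (Fin 3 → ℝ)) : Set (Fin 3 → ℝ)) ∩ K₀ := by
  have hV₃ : V₃ ∈ line[ℝ, V₄, V₁₃] :=
    V₃_eq_lineMap_V₄_V₁₃ ▸ lineMap_mem_affineSpan_pair _ _ _
  have hV₁₅ : V₁₅ ∈ line[ℝ, V₄, V₁₃] :=
    V₁₅_eq_lineMap_V₄_V₁₃ ▸ lineMap_mem_affineSpan_pair _ _ _
  have hV₁₅_edge : V₁₅ ∈ segment ℝ V₇ V₈ :=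
    openSegment_subset_segment ℝ _ _ V₁₅_mem_openSegment_V₇_V₈
  refine ⟨?_, V₁₅_mem_openSegment_V₇_V₈,
    ne_of_apply_ne (· 0) (by norm_num [V₃, V₄]), ne_of_apply_ne (· 0) (by norm_num [V₃, V₁₃]),
    ne_of_apply_ne (· 0) (by norm_num [V₃, V₁₅]), ne_of_apply_ne (· 0) (by norm_num [V₄, V₁₃]),
    ne_of_apply_ne (· 0) (by norm_num [V₄, V₁₅]), ne_of_apply_ne (· 0) (by norm_num [V₁₃, V₁₅]),
    ?_⟩
  · rw [Set.pair_comm V₁₃, Set.insert_comm V₄]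
    exact collinear_insert_insert_of_mem_affineSpan_pair hV₃ hV₁₅
  · rintro x (rfl | rfl | rfl | rfl)
    · exact ⟨hV₃, by simp [K₀, left_mem_segment]⟩
    · exact ⟨left_mem_affineSpan_pair ℝ _ _, by simp [K₀, left_mem_segment]⟩
    · exact ⟨right_mem_affineSpan_pair ℝ _ _, by simp [K₀, left_mem_segment]⟩
    · exact ⟨hV₁₅, by simp [K₀, hV₁₅_edge]⟩
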